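/- arXiv:2311.16996 — 5 statements merged into one kernel-verified Lean document; each statement's English description precedes it below -/
import Mathlib

section
/- In a Markov decision process with nonempty state space S, nonempty action space A, transition kernel P : S → A → PMF(S), goal-conditioned reward R : S → ℝ with R(s) ∈ {0,1} for all s, and discount factor γ with 0 < γ < 1, suppose V : S → ℝ satisfies 0 ≤ V(s) ≤ 1 for all s and the goal-conditioned Bellman optimality equation. If s̃ is a state with R(s̃) = 0 and some s' ∈ T(s̃) satisfies V(s') > 0, then there exists s' ∈ T(s̃) with s' ≠ s̃ and V(s') > V(s̃). -/
/-! If no state reachable from `s̃` had a larger value, every action value at `s̃` would be an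
average of values at most `V s̃`, and the Bellman equation at the non-goal state `s̃` would give
`V s̃ ≤ γ V s̃`. But `V s̃` is at least the positive value of some reachable state, so this
contradicts `γ < 1`. -/

theorem PMF.tsum_toReal_mul_le_of_le_on_support {α : Type*} (p : PMF α) {f : α → ℝ} {c : ℝ}
    (hc : 0 ≤ c) (hf : ∀ s ∈ p.support, f s ≤ c) : ∑' s, (p s).toReal * f s ≤ c := by
  have hp : Summable fun s => (p s).toReal := ENNReal.summable_toReal (by simp [p.tsum_coe])
  have hp_one : ∑' s, (p s).toReal = 1 := by
    rw [← ENNReal.tsum_toReal_eq p.apply_ne_top, p.tsum_coe, ENNReal.toReal_one]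
  have hle : ∀ s, (p s).toReal * f s ≤ (p s).toReal * c := fun s => by
    by_cases hs : p s = 0
    · simp [hs]
    · exact mul_le_mul_of_nonneg_left (hf s ((p.mem_support_iff s).2 hs)) ENNReal.toReal_nonneg
  by_cases hsum : Summable fun s => (p s).toReal * f s
  · calc ∑' s, (p s).toReal * f s ≤ ∑' s, (p s).toReal * c := hsum.tsum_le_tsum hle (hp.mul_right c)
      _ = c := by rw [tsum_mul_right, hp_one, one_mul]
  -- a non-summable series has the junk sum `0`, which is why `0 ≤ c` is needed
  · rw [tsum_eq_zero_of_not_summable hsum]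
    exact hc

theorem exists_reachable_strictly_better_general
    {S A : Type*}
    (P : S → A → PMF S) (R : S → ℝ)
    (γ : ℝ) (hγ0 : 0 < γ) (hγ1 : γ < 1)
    (V : S → ℝ)
    (hBellman : ∀ s, V s =
      R s + γ * (1 - R s) * ⨆ a : A, ∑' s', ((P s a) s').toReal * V s')
    (sTilde : S) (hRs : R sTilde = 0)
    (hpos : ∃ s', (∃ a : A, 0 < (P sTilde a) s') ∧ 0 < V s') :
    ∃ s', (∃ a : A, 0 < (P sTilde a) s') ∧ s' ≠ sTilde ∧ V sTilde < V s' := by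
  by_contra! hnot_better
  have hle : ∀ s', (∃ a : A, 0 < (P sTilde a) s') → V s' ≤ V sTilde := fun s' hs' =>
    (eq_or_ne s' sTilde).elim (fun h => h ▸ le_rfl) (hnot_better s' hs')
  obtain ⟨s₀, hs₀, hV₀⟩ := hpos
  have hV_pos : 0 < V sTilde := hV₀.trans_le (hle s₀ hs₀)
  have haction : ∀ a, ∑' s', ((P sTilde a) s').toReal * V s' ≤ V sTilde := fun a =>
    (P sTilde a).tsum_toReal_mul_le_of_le_on_support hV_pos.le fun s' hs' =>
      hle s' ⟨a, pos_iff_ne_zero.2 (((P sTilde a).mem_support_iff s').1 hs')⟩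
  have hcontract : V sTilde ≤ γ * V sTilde :=
    calc V sTilde = γ * ⨆ a : A, ∑' s', ((P sTilde a) s').toReal * V s' := by
          simpa [hRs] using hBellman sTilde
      _ ≤ γ * V sTilde := by gcongr; exact Real.iSup_le haction hV_pos.le
  nlinarith

/-- In an MDP with transition kernel `P : S → A → PMF S`, goal-conditioned reward
`R` taking values in `{0,1}`, discount `0 < γ < 1`, and `V` with `0 ≤ V ≤ 1`
satisfying the goal-conditioned Bellman optimality equation: if `R s̃ = 0` and
some one-step reachable state has positive value, then there is a one-step
reachable state `s' ≠ s̃` with `V s' > V s̃`. -/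
theorem exists_reachable_strictly_better
    {S A : Type*} [Nonempty S] [Nonempty A]
    (P : S → A → PMF S) (R : S → ℝ) (hR : ∀ s, R s = 0 ∨ R s = 1)
    (γ : ℝ) (hγ0 : 0 < γ) (hγ1 : γ < 1)
    (V : S → ℝ) (hV0 : ∀ s, 0 ≤ V s) (hV1 : ∀ s, V s ≤ 1)
    (hBellman : ∀ s, V s =
      R s + γ * (1 - R s) * ⨆ a : A, ∑' s', ((P s a) s').toReal * V s')
    (sTilde : S) (hRs : R sTilde = 0)
    (hpos : ∃ s', (∃ a : A, 0 < (P sTilde a) s') ∧ 0 < V s') :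
    ∃ s', (∃ a : A, 0 < (P sTilde a) s') ∧ s' ≠ sTilde ∧ V sTilde < V s' :=
  exists_reachable_strictly_better_general P R γ hγ0 hγ1 V hBellman sTilde hRs hpos
end

section
/- In a deterministic Markov decision process with transition function f : S × A → S, goal-conditioned reward R with R(s) ∈ {0,1}, discount factor γ with 0 < γ < 1, and a function V : S → ℝ with 0 ≤ V ≤ 1 satisfying the deterministic Bellman optimality equation, let (s_i)_{i≥0} be a greedy trajectory with V(s_0) > 0. Then the goal is achieved within N = ⌈log V(s_0) / log γ⌉ steps: there exists an index i with i ≤ N and R(s_i) = 1. -/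
/-- In a deterministic MDP with transition function `f : S × A → S`,
goal-conditioned reward `R` in `{0,1}`, discount `0 < γ < 1`, and `V` with
`0 ≤ V ≤ 1` satisfying the deterministic Bellman optimality equation, a greedy
trajectory with `V (s 0) > 0` achieves the goal within
`⌈log (V (s 0)) / log γ⌉` steps. -/
theorem greedy_trajectory_reaches_goal
    {S A : Type*} [Nonempty A]
    (f : S × A → S) (R : S → ℝ) (hR : ∀ s, R s = 0 ∨ R s = 1)
    (γ : ℝ) (hγ0 : 0 < γ) (hγ1 : γ < 1)
    (V : S → ℝ) (hV0 : ∀ s, 0 ≤ V s) (hV1 : ∀ s, V s ≤ 1)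
    (hBellman : ∀ s, V s = R s + γ * (1 - R s) * ⨆ a : A, V (f (s, a)))
    (traj : ℕ → S)
    (hstep : ∀ i, ∃ a : A, f (traj i, a) = traj (i + 1))
    (hgreedy : ∀ i, V (traj (i + 1)) = ⨆ a : A, V (f (traj i, a)))
    (hpos : 0 < V (traj 0)) :
    ∃ i ≤ ⌈Real.log (V (traj 0)) / Real.log γ⌉₊, R (traj i) = 1 := by
  by_contra h
  push_neg at h
  set N := ⌈Real.log (V (traj 0)) / Real.log γ⌉₊ with hN
  have hzero : ∀ i ≤ N, R (traj i) = 0 := fun i hi =>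
    (hR (traj i)).resolve_right (h i hi)
  have key : ∀ i ≤ N + 1, V (traj 0) = γ ^ i * V (traj i) := by
    intro i hi
    induction i with
    | zero => simp
    | succ k ih =>
      have hk : k ≤ N := Nat.lt_succ_iff.mp hi
      have ihk := ih (le_trans hk (Nat.le_succ N))
      have hb := hBellman (traj k)
      rw [hzero k hk, ← hgreedy k] at hb
      rw [ihk, hb]
      ring
  have hVN := key (N + 1) le_rfl
  have hx0 : Real.log (V (traj 0)) ≤ 0 := Real.log_nonpos (le_of_lt hpos) (hV1 _)
  have hlogγ : Real.log γ < 0 := Real.log_neg hγ0 hγ1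
  set x := Real.log (V (traj 0)) / Real.log γ with hxdef
  have hrx : γ ^ x = V (traj 0) := by
    rw [Real.rpow_def_of_pos hγ0, hxdef, mul_comm,
      div_mul_cancel₀ _ (ne_of_lt hlogγ), Real.exp_log hpos]
  have hxlt : x < (N + 1 : ℕ) := by
    push_cast
    calc x ≤ (N : ℝ) := Nat.le_ceil x
    _ < N + 1 := by linarith
  have hlt : γ ^ ((N + 1 : ℕ) : ℝ) < γ ^ x :=
    Real.rpow_lt_rpow_of_exponent_gt hγ0 hγ1 hxlt
  rw [Real.rpow_natCast, hrx] at hlt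
  have hle : γ ^ (N + 1) * V (traj (N + 1)) ≤ γ ^ (N + 1) * 1 := by
    apply mul_le_mul_of_nonneg_left (hV1 _) (pow_nonneg (le_of_lt hγ0) _)
  rw [← hVN, mul_one] at hle
  linarith
end

section
/- In a deterministic Markov decision process with transition function f : S × A → S and any function V : S → ℝ with 0 ≤ V ≤ 1, suppose s* is a T-local optimum point for V of depth k, there exists an action a with f(s*,a) = s* (a self-loop at s*), and H is a natural number with 1 ≤ H ≤ k. Let t : ℕ → S be a closed-loop model-predictive-control trajectory with favorable tie-breaking starting at s*, meaning: t(0) = s*, and for every n, (i) t(n+1) ∈ T(t(n)), (ii) sup{V(s') : s' ∈ reach(H−1, t(n+1))} = sup{V(s') : s' ∈ reach(H, t(n))} (t(n+1) is the first state of an H-step plan maximizing the terminal value V(s_H)), and (iii) for every s₁ ∈ T(t(n)) with sup{V(s') : s' ∈ reach(H−1, s₁)} = sup{V(s') : s' ∈ reach(H, t(n))}, one has V(s₁) ≤ V(t(n+1)) (ties among optimal first steps are broken by maximizing the value of the first state). Then t(n) = s* for every n; in particular, model-based planning with horizon H ≤ k never leaves the T-local optimum point s*. -/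
/-- The `k`-step reachable set of a state in a deterministic MDP with
transition function `f : S × A → S`. -/
def reach {S A : Type*} (f : S × A → S) : ℕ → S → Set S
  | 0, s => {s}
  | k + 1, s => ⋃ t ∈ reach f k s, Set.range (fun a : A => f (t, a))

/-- If `s*` is a `T`-local optimum point of depth `k` for `V` with a self-loop,
and `1 ≤ H ≤ k`, then a closed-loop MPC trajectory with favorable tie-breaking
starting at `s*` never leaves `s*`. -/
theorem mpc_trapped_in_local_optimum
    {S A : Type*} [Nonempty A]
    (f : S × A → S) (V : S → ℝ) (hV0 : ∀ s, 0 ≤ V s) (hV1 : ∀ s, V s ≤ 1)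
    (sStar : S) (k : ℕ) (hk : 1 ≤ k)
    (hlocal1 : ∃ s'', V s'' > V sStar)
    (hlocal2 : ∀ s', (∃ a : A, f (sStar, a) = s') → s' ≠ sStar → V s' < V sStar)
    (hdepth1 : ∀ j, 1 ≤ j → j ≤ k → ∀ s' ∈ reach f j sStar, V s' ≤ V sStar)
    (hdepth2 : ∃ s' ∈ reach f (k + 1) sStar, V sStar < V s')
    (hself : ∃ a : A, f (sStar, a) = sStar)
    (H : ℕ) (hH1 : 1 ≤ H) (hHk : H ≤ k)
    (t : ℕ → S) (ht0 : t 0 = sStar)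
    (hstep : ∀ n, ∃ a : A, f (t n, a) = t (n + 1))
    (hplan : ∀ n, sSup (V '' reach f (H - 1) (t (n + 1))) =
      sSup (V '' reach f H (t n)))
    (htie : ∀ n, ∀ s₁, (∃ a : A, f (t n, a) = s₁) →
      sSup (V '' reach f (H - 1) s₁) = sSup (V '' reach f H (t n)) →
      V s₁ ≤ V (t (n + 1))) :
    ∀ n, t n = sStar := by
  obtain ⟨a₀, ha₀⟩ := hself
  -- sStar is in each reachable set of itself
  have hmem : ∀ j, sStar ∈ reach f j sStar := by
    intro j
    induction j with
    | zero => simp [reach]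
    | succ j ih =>
      simp only [reach, Set.mem_iUnion]
      exact ⟨sStar, ih, a₀, ha₀⟩
  -- bound on values of reachable states
  have hbound : ∀ j, j ≤ k → ∀ s' ∈ reach f j sStar, V s' ≤ V sStar := by
    intro j hj s' hs'
    rcases Nat.eq_zero_or_pos j with h0 | h1
    · subst h0; simp [reach] at hs'; subst hs'; rfl
    · exact hdepth1 j h1 hj s' hs'
  -- sup of values over reachable sets equals V sStar
  have hsup : ∀ j, j ≤ k → sSup (V '' reach f j sStar) = V sStar := by
    intro j hj
    apply le_antisymm
    · apply csSup_le ⟨V sStar, Set.mem_image_of_mem V (hmem j)⟩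
      rintro x ⟨s', hs', rfl⟩
      exact hbound j hj s' hs'
    · apply le_csSup
      · refine ⟨V sStar, ?_⟩
        rintro x ⟨s', hs', rfl⟩
        exact hbound j hj s' hs'
      · exact Set.mem_image_of_mem V (hmem j)
  intro n
  induction n with
  | zero => exact ht0
  | succ n ih =>
    have hkey : V sStar ≤ V (t (n + 1)) := by
      apply htie n sStar ⟨a₀, by rw [ih]; exact ha₀⟩
      rw [ih, hsup (H - 1) (le_trans (Nat.sub_le H 1) hHk), hsup H hHk]
    by_contra hne
    have := hlocal2 (t (n + 1)) ⟨(hstep n).choose, by rw [← ih]; exact (hstep n).choose_spec⟩ hne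
    linarith
end

section
/- In a deterministic Markov decision process with transition function f : S × A → S and any function V : S → ℝ with 0 ≤ V ≤ 1, suppose the self-loop assumption holds for V: for every state s, if V(f(s,a)) ≤ V(s) for all actions a, then there exists an action a with f(s,a) = s. Let s₀ be a state, H ≥ 1 a planning horizon, and suppose s₁ is a state with s₁ ∈ reach(H', s₀) for some H' with 1 ≤ H' ≤ H, and s₁ attains the maximum of V over all states reachable in at most H steps, i.e., V(s') ≤ V(s₁) for every s' ∈ reach(j, s₀) and every j with 1 ≤ j ≤ H. Then s₁ ∈ reach(H, s₀). -/
/-- Under the self-loop assumption, a maximizer of `V` among states reachable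
from `s₀` in at most `H` steps can be reached in exactly `H` steps. -/
theorem maximizer_reachable_in_exactly_H_steps
    {S A : Type*} [Nonempty A]
    (f : S × A → S) (V : S → ℝ) (hV0 : ∀ s, 0 ≤ V s) (hV1 : ∀ s, V s ≤ 1)
    (hself : ∀ s : S, (∀ a : A, V (f (s, a)) ≤ V s) → ∃ a : A, f (s, a) = s)
    (s₀ s₁ : S) (H : ℕ) (hH : 1 ≤ H)
    (H' : ℕ) (hH'1 : 1 ≤ H') (hH'H : H' ≤ H) (hs₁ : s₁ ∈ reach f H' s₀)
    (hmax : ∀ j, 1 ≤ j → j ≤ H → ∀ s' ∈ reach f j s₀, V s' ≤ V s₁) :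
    s₁ ∈ reach f H s₀ := by
  have key : ∀ d, H' + d ≤ H → s₁ ∈ reach f (H' + d) s₀ := by
    intro d
    induction d with
    | zero => intro _; exact hs₁
    | succ n ih =>
      intro hle
      have hn : H' + n ≤ H := by omega
      have hmem := ih hn
      have hsucc : ∀ a : A, V (f (s₁, a)) ≤ V s₁ := by
        intro a
        apply hmax (H' + n + 1) (by omega) (by omega)
        show f (s₁, a) ∈ ⋃ t ∈ reach f (H' + n) s₀, Set.range (fun a : A => f (t, a))
        exact Set.mem_biUnion hmem ⟨a, rfl⟩
      obtain ⟨a, ha⟩ := hself s₁ hsucc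
      show s₁ ∈ ⋃ t ∈ reach f (H' + n) s₀, Set.range (fun a : A => f (t, a))
      exact Set.mem_biUnion hmem ⟨a, ha⟩
  have := key (H - H') (by omega)
  rwa [show H' + (H - H') = H by omega] at this
end

section
/- In a deterministic Markov decision process with transition function f : S × A → S and any function V : S → ℝ with 0 ≤ V ≤ 1, suppose the self-loop assumption holds for V: for every state s, if V(f(s,a)) ≤ V(s) for all actions a, then there exists an action a with f(s,a) = s. Let s₀ be a state and H ≥ 1 a planning horizon, and suppose there exists a state s₁ with s₁ ∈ reach(H', s₀) for some H' with 1 ≤ H' ≤ H such that V(s₁) > V(s₀) and V(s') ≤ V(s₁) for every s' ∈ reach(j, s₀) and every j with 1 ≤ j ≤ H (s₁ attains the maximum of V over all states reachable in at most H steps, and this maximum exceeds V(s₀); this holds in particular when s₀ is not trapped in any T-local optimum of depth at least H). Then there exists s' ∈ reach(H, s₀) with V(s') > V(s₀); that is, open-loop execution of the action sequence maximizing the H-step planning objective V(s_H) reaches a state of strictly higher value than the initial state. -/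
lemma reach_step {S A : Type*} (f : S × A → S) {k : ℕ} {s₀ s : S}
    (h : s ∈ reach f k s₀) (a : A) : f (s, a) ∈ reach f (k + 1) s₀ := by
  simp only [reach, Set.mem_iUnion]
  exact ⟨s, h, a, rfl⟩

/-- Under the self-loop assumption, if some state reachable in at most `H`
steps attains the maximum of `V` over all states reachable in at most `H`
steps and has value strictly greater than `V s₀`, then open-loop model-based
planning with horizon `H` reaches a state of strictly higher value. -/
theorem mbp_escapes_with_long_horizon
    {S A : Type*} [Nonempty A]
    (f : S × A → S) (V : S → ℝ) (hV0 : ∀ s, 0 ≤ V s) (hV1 : ∀ s, V s ≤ 1)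
    (hself : ∀ s : S, (∀ a : A, V (f (s, a)) ≤ V s) → ∃ a : A, f (s, a) = s)
    (s₀ : S) (H : ℕ) (hH : 1 ≤ H)
    (hexists : ∃ s₁, (∃ H', 1 ≤ H' ∧ H' ≤ H ∧ s₁ ∈ reach f H' s₀) ∧
      V s₀ < V s₁ ∧
      ∀ j, 1 ≤ j → j ≤ H → ∀ s' ∈ reach f j s₀, V s' ≤ V s₁) :
    ∃ s' ∈ reach f H s₀, V s₀ < V s' := by
  obtain ⟨s₁, ⟨H', hH'1, hH'H, hmem⟩, hlt, hmax⟩ := hexists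
  suffices h : ∀ m, H' ≤ m → m ≤ H → s₁ ∈ reach f m s₀ by
    exact ⟨s₁, h H hH'H le_rfl, hlt⟩
  intro m hm hmH
  induction m, hm using Nat.le_induction with
  | base => exact hmem
  | succ n hn ih =>
    have hnH : n ≤ H := le_of_lt hmH
    have hmem' : s₁ ∈ reach f n s₀ := ih hnH
    have hsl : ∀ a : A, V (f (s₁, a)) ≤ V s₁ := fun a =>
      hmax (n + 1) (Nat.le_add_left 1 n) hmH _ (reach_step f hmem' a)
    obtain ⟨a, ha⟩ := hself s₁ hsl
    have := reach_step f hmem' a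
    rwa [ha] at this
end
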